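/- arXiv:1008.2745 — 2 statements merged into one kernel-verified Lean document; each statement's English description precedes it below -/
import Mathlib

section
/- For every real number u and every angle α ∈ [0, π], if u ≥ cos α then α ≥ π/2 - u - 36·|u|^(3/2). -/
/-!
Since `cos` is decreasing on `[0, π]`, `cos α ≤ u` gives `α ≥ arccos u = π/2 - arcsin u`, so it
suffices to show `arcsin u ≤ u + 36 |u|^(3/2)`. For `u ≤ 0` this follows from `arcsin u ≤ u`
(or `arcsin u = -π/2` below `-1`). For `u > 0`, either `36 u^(3/2) ≥ π/2 ≥ arcsin u`, or `u` is
so small that `sin (u + u³) ≥ u` by `sin y ≥ y - y³/6`, whence `arcsin u ≤ u + u³ ≤ u + u^(3/2)`.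
-/

open Real

namespace Real

lemma arcsin_le_self_of_nonpos {x : ℝ} (hx₁ : -1 ≤ x) (hx₀ : x ≤ 0) : arcsin x ≤ x := by
  rw [arcsin_le_iff_le_sin ⟨hx₁, by linarith⟩ ⟨by linarith [pi_gt_three], by linarith [pi_pos]⟩]
  have := sin_le (neg_nonneg.2 hx₀)
  rw [sin_neg] at this
  linarith

lemma arcsin_le_add_pow_three {x : ℝ} (hx₀ : 0 ≤ x) (hx₁ : x ≤ 1 / 2) :
    arcsin x ≤ x + x ^ 3 := by
  have hlin : x + x ^ 3 ≤ 5 / 4 * x := by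
    have : x ^ 2 ≤ 1 / 4 := by nlinarith
    nlinarith [mul_le_mul_of_nonneg_left this hx₀]
  rw [arcsin_le_iff_le_sin ⟨by linarith, by linarith⟩
    ⟨by linarith [pi_gt_three, pow_nonneg hx₀ 3], by linarith [pi_gt_three]⟩]
  have hcube : (x + x ^ 3) ^ 3 ≤ 6 * x ^ 3 :=
    calc (x + x ^ 3) ^ 3 ≤ (5 / 4 * x) ^ 3 := by gcongr
      _ ≤ 6 * x ^ 3 := by nlinarith [pow_nonneg hx₀ 3]
  linarith [sin_ge_sub_cube (by positivity : 0 ≤ x + x ^ 3)]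

lemma arcsin_le_add_mul_rpow_of_nonneg {x : ℝ} (hx : 0 ≤ x) :
    arcsin x ≤ x + 36 * x ^ ((3 : ℝ) / 2) := by
  set e := x ^ ((3 : ℝ) / 2)
  have he₀ : 0 ≤ e := rpow_nonneg hx _
  have he_sq : e ^ 2 = x ^ 3 := by
    rw [← rpow_natCast e, ← rpow_mul hx, ← rpow_natCast]
    norm_num
  rcases le_or_gt (π / 2) (x + 36 * e) with hbig | hsmall
  · exact (arcsin_le_pi_div_two x).trans hbig
  -- Now `36 e < π / 2 < 2`, so `x³ = e² < 1 / 324`.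
  have he : e < 1 / 18 := by linarith [pi_lt_four]
  have hx₁ : x ≤ 1 / 2 := by
    by_contra! hx₁
    nlinarith [pow_le_pow_left₀ (by norm_num) hx₁.le 3]
  calc arcsin x ≤ x + x ^ 3 := arcsin_le_add_pow_three hx hx₁
    _ ≤ x + 36 * e := by nlinarith

lemma arcsin_le_add_mul_abs_rpow (x : ℝ) : arcsin x ≤ x + 36 * |x| ^ ((3 : ℝ) / 2) := by
  rcases le_total 0 x with hx | hx
  · rw [abs_of_nonneg hx]
    exact arcsin_le_add_mul_rpow_of_nonneg hx
  rcases le_total (-1) x with hx₁ | hx₁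
  · linarith [arcsin_le_self_of_nonpos hx₁ hx, rpow_nonneg (abs_nonneg x) ((3 : ℝ) / 2)]
  · have : -x ≤ (-x) ^ ((3 : ℝ) / 2) := self_le_rpow_of_one_le (by linarith) (by norm_num)
    rw [arcsin_of_le_neg_one hx₁, abs_of_nonpos hx]
    linarith [pi_pos]

end Real

theorem angle_lower_bound_of_cos_le (u α : ℝ) (hα0 : 0 ≤ α) (hαπ : α ≤ π)
    (h : u ≥ Real.cos α) :
    α ≥ π / 2 - u - 36 * |u| ^ ((3 : ℝ) / 2) := by
  have harccos : arccos u ≤ α := arccos_cos hα0 hαπ ▸ arccos_le_arccos h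
  rw [arccos_eq_pi_div_two_sub_arcsin] at harccos
  linarith [arcsin_le_add_mul_abs_rpow u]
end

section
/- Let a ≤ c and b > 0 be nonnegative reals with a > 0. In each of the three model cases κ ∈ {-1, 0, 1} (with a, b, c ≤ π/2 when κ = 1), the comparison angle θ at the vertex between the sides of lengths a and b (opposite side c) satisfies cos θ ≤ tn_κ(b/2)/tn_κ(a), where tn_κ(t) = tanh t for κ = -1, t for κ = 0, and tan t for κ = 1. -/
/-!
In each model space the numerator of the law of cosines is antitone in the opposite side `c`
(through `-c ^ 2`, `-cosh c`, resp. `cos c` on `[0, π]`) while the denominator is nonnegative,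
so `cos θ` is at most its value for the isosceles triangle `c = a`. There the factor depending
on `b` is `b ^ 2 / (2 * b)`, `(cosh b - 1) / sinh b`, resp. `(1 - cos b) / sin b`, which by the
half-angle formulas is `tn_κ (b / 2)`, and the factor depending on `a` is `1 / tn_κ a`.
-/

open Real

theorem Real.tan_half_eq_one_sub_cos_div_sin (x : ℝ) : tan (x / 2) = (1 - cos x) / sin x := by
  obtain ⟨y, rfl⟩ : ∃ y, x = 2 * y := ⟨x / 2, by ring⟩
  have h : 1 - cos (2 * y) = 2 * sin y * sin y := by rw [cos_two_mul, cos_sq']; ring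
  rw [mul_div_cancel_left₀ y two_ne_zero, h, sin_two_mul, tan_eq_sin_div_cos]
  rcases eq_or_ne (sin y) 0 with h0 | h0
  · simp [h0]
  · rw [mul_div_mul_left _ _ (mul_ne_zero two_ne_zero h0)]

theorem Real.tanh_half_eq_cosh_sub_one_div_sinh (x : ℝ) :
    tanh (x / 2) = (cosh x - 1) / sinh x := by
  obtain ⟨y, rfl⟩ : ∃ y, x = 2 * y := ⟨x / 2, by ring⟩
  have h : cosh (2 * y) - 1 = 2 * sinh y * sinh y := by rw [cosh_two_mul, cosh_sq]; ring
  rw [mul_div_cancel_left₀ y two_ne_zero, h, sinh_two_mul, tanh_eq_sinh_div_cosh]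
  rcases eq_or_ne (sinh y) 0 with h0 | h0
  · simp [h0]
  · rw [mul_div_mul_left _ _ (mul_ne_zero two_ne_zero h0)]

section ComparisonCos

variable {a b c : ℝ}

theorem euclidean_comparison_cos_le (ha : 0 ≤ a) (hac : a ≤ c) (hb : 0 ≤ b) :
    (a ^ 2 + b ^ 2 - c ^ 2) / (2 * a * b) ≤ (b / 2) / a :=
  calc (a ^ 2 + b ^ 2 - c ^ 2) / (2 * a * b) ≤ (a ^ 2 + b ^ 2 - a ^ 2) / (2 * a * b) := by
        gcongr
    _ = (b / 2) / a := by
        rcases eq_or_ne b 0 with rfl | hb0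
        · simp
        · rw [add_sub_cancel_left, sq, div_div, mul_comm (2 * a) b, mul_div_mul_left _ _ hb0]

theorem hyperbolic_comparison_cos_le (ha : 0 ≤ a) (hac : a ≤ c) (hb : 0 ≤ b) :
    (cosh a * cosh b - cosh c) / (sinh a * sinh b) ≤ tanh (b / 2) / tanh a :=
  have hcosh : cosh a ≤ cosh c := cosh_le_cosh.2 <| by
    rwa [abs_of_nonneg ha, abs_of_nonneg (ha.trans hac)]
  have := sinh_nonneg_iff.2 ha
  have := sinh_nonneg_iff.2 hb
  calc (cosh a * cosh b - cosh c) / (sinh a * sinh b)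
      ≤ cosh a * (cosh b - 1) / (sinh a * sinh b) := by gcongr; linarith
    _ = tanh (b / 2) / tanh a := by
        rw [mul_div_mul_comm, tanh_half_eq_cosh_sub_one_div_sinh, tanh_eq_sinh_div_cosh,
          div_div_eq_mul_div, mul_comm, mul_div_assoc]

theorem spherical_comparison_cos_le (ha : 0 ≤ a) (hac : a ≤ c) (hc : c ≤ π) (hb : 0 ≤ b)
    (hb' : b ≤ π) :
    (cos c - cos a * cos b) / (sin a * sin b) ≤ tan (b / 2) / tan a :=
  have := sin_nonneg_of_nonneg_of_le_pi ha (hac.trans hc)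
  have := sin_nonneg_of_nonneg_of_le_pi hb hb'
  calc (cos c - cos a * cos b) / (sin a * sin b)
      ≤ cos a * (1 - cos b) / (sin a * sin b) := by
        gcongr; linarith [cos_le_cos_of_nonneg_of_le_pi ha hc hac]
    _ = tan (b / 2) / tan a := by
        rw [mul_div_mul_comm, tan_half_eq_one_sub_cos_div_sin, tan_eq_sin_div_cos,
          div_div_eq_mul_div, mul_comm, mul_div_assoc]

end ComparisonCos

theorem comparison_angle_cos_bound (a b c : ℝ) (ha : 0 < a) (hac : a ≤ c)
    (hb : 0 < b) :
    ((a ^ 2 + b ^ 2 - c ^ 2) / (2 * a * b) ≤ (b / 2) / a) ∧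
    ((Real.cosh a * Real.cosh b - Real.cosh c) / (Real.sinh a * Real.sinh b) ≤
      Real.tanh (b / 2) / Real.tanh a) ∧
    (a ≤ π / 2 → b ≤ π / 2 → c ≤ π / 2 →
      (Real.cos c - Real.cos a * Real.cos b) / (Real.sin a * Real.sin b) ≤
        Real.tan (b / 2) / Real.tan a) :=
  ⟨euclidean_comparison_cos_le ha.le hac hb.le, hyperbolic_comparison_cos_le ha.le hac hb.le,
    fun _ hbπ hcπ => spherical_comparison_cos_le ha.le hac (by linarith [pi_pos]) hb.le
      (by linarith [pi_pos])⟩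
end
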